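/- arXiv:2410.07811 — 6 statements merged into one kernel-verified Lean document; each statement's English description precedes it below -/
import Mathlib

section
/- Let Ω, U, λ, u be as in the setting. Then the singular set { z ∈ closure(Ω) : u(z) = 0 and ∇u(z) = 0 } is a finite set. -/
open Metric Set Filter Topology MeasureTheory

noncomputable section

abbrev E2 := EuclideanSpace ℝ (Fin 2)

/-- The Laplacian of `u`: the sum of the two pure second partial derivatives. -/
def lap (u : E2 → ℝ) (z : E2) : ℝ :=
  ∑ i : Fin 2, iteratedFDeriv ℝ 2 u z (fun _ => EuclideanSpace.single i 1)

/-!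
Near a singular point `x`, let `Q` be the lowest-order nonzero homogeneous term of the Taylor
series of `u` at `x`; it exists because `u` does not vanish identically on the connected set `U`,
and its degree `N` is at least `2`. The terms of degree `N - 2` in `Δu + λu = 0` give `ΔQ = 0`.
On the plane, `∂Q/∂x - i ∂Q/∂y` is then holomorphic, and homogeneity makes it vanish on a whole
line through a critical point of `Q`. As `Q` is not constant, `∇Q` vanishes only at `0`, so
`|∇Q y| ≥ c |y| ^ (N - 1)`.
Since `∇u (x + y) = ∇Q y + O(|y| ^ N)`, the point `x` is an isolated critical point of `u`.
Singular points are thus isolated in `U`, and the compact set `closure Ω` holds finitely many.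
-/

open Asymptotics InnerProductSpace Laplacian Module

namespace FormalMultilinearSeries

variable {𝕜 E F : Type*} [NontriviallyNormedField 𝕜] [NormedAddCommGroup E] [NormedSpace 𝕜 E]
  [NormedAddCommGroup F] [NormedSpace 𝕜 F] (p q : FormalMultilinearSeries 𝕜 E F)

def singleTerm (n : ℕ) : FormalMultilinearSeries 𝕜 E F := fun k => if k = n then p k else 0

theorem hasFiniteFPowerSeriesOnBall_singleTerm (n : ℕ) :
    HasFiniteFPowerSeriesOnBall (fun y => p n fun _ => y) (p.singleTerm n) 0 (n + 1) ⊤ := by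
  refine .mk' (fun m hm => if_neg (by omega)) ENNReal.zero_lt_top fun y _ => ?_
  rw [zero_add, Finset.sum_eq_single_of_mem n (Finset.self_mem_range_succ n)]
  · simp [singleTerm]
  · intro k _ hk
    simp [singleTerm, hk]

theorem derivSeries_congr {n : ℕ} (h : p (n + 1) = q (n + 1)) :
    p.derivSeries n = q.derivSeries n := by
  have h' : ∀ m, m = n + 1 → p m = q m := by rintro m rfl; exact h
  simp only [derivSeries, ContinuousLinearMap.compFormalMultilinearSeries_apply,
    changeOriginSeries, changeOriginSeriesTerm, h' (1 + n) (add_comm 1 n)]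

variable [CompleteSpace F]

theorem derivSeries_apply_diag_eq_fderiv (n : ℕ) (y : E) :
    p.derivSeries n (fun _ => y) = fderiv 𝕜 (fun z => p (n + 1) fun _ => z) y := by
  have hs := ((p.hasFiniteFPowerSeriesOnBall_singleTerm (n + 1)).toHasFPowerSeriesOnBall.fderiv
    |>.hasSum (y := y) (by simp))
  have hterms : (fun k => (p.singleTerm (n + 1)).derivSeries k fun _ => y) =
      fun k => if k = n then p.derivSeries n (fun _ => y) else 0 := by
    ext1 k
    split_ifs with hk
    · subst hk
      rw [derivSeries_congr (p.singleTerm (k + 1)) p (by simp [singleTerm])]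
    · rw [derivSeries_eq_zero _ (by simp [singleTerm, hk])]
      rfl
  rw [zero_add, hterms] at hs
  exact (hs.unique (hasSum_ite_eq n _)).symm

end FormalMultilinearSeries

namespace HasFPowerSeriesAt

variable {𝕜 E F G : Type*} [NontriviallyNormedField 𝕜] [NormedAddCommGroup E] [NormedSpace 𝕜 E]
  [NormedAddCommGroup F] [NormedSpace 𝕜 F] [NormedAddCommGroup G] [NormedSpace 𝕜 G]
  {f : E → F} {q : FormalMultilinearSeries 𝕜 E F} {x : E} {N : ℕ}

theorem exists_apply_diag_ne_zero (hq : HasFPowerSeriesAt f q x) (hf : ¬f =ᶠ[𝓝 x] 0) :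
    ∃ N, (∃ y, q N (fun _ => y) ≠ 0) ∧ ∀ k < N, ∀ y, q k (fun _ => y) = 0 := by
  classical
  have hex : ∃ N, ∃ y, q N (fun _ => y) ≠ 0 := by
    by_contra! h
    refine hf ?_
    filter_upwards [hq.eventually_hasSum_sub] with z hz
    rw [show (fun n => q n fun _ => z - x) = 0 from funext fun n => h n (z - x)] at hz
    exact hz.unique hasSum_zero
  exact ⟨Nat.find hex, Nat.find_spec hex, fun k hk => by simpa using Nat.find_min hex hk⟩

variable [CompleteSpace F]

theorem isBigO_fderiv_sub_fderiv_apply_diag (hq : HasFPowerSeriesAt f q x)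
    (hlow : ∀ k < N, ∀ y, q k (fun _ => y) = 0) :
    (fun z => fderiv 𝕜 f z - fderiv 𝕜 (fun y => q N fun _ => y) (z - x)) =O[𝓝 x]
      fun z => ‖z - x‖ ^ N := by
  obtain ⟨r, hr⟩ := hq
  have hpartial : ∀ y, q.derivSeries.partialSum N y = fderiv 𝕜 (fun y => q N fun _ => y) y := by
    intro y
    cases N with
    | zero =>
      have hconst : (fun y => q 0 fun _ => y) = fun _ => q 0 fun _ => 0 := by
        ext1 y; congr 1; exact Subsingleton.elim _ _
      simp [FormalMultilinearSeries.partialSum, hconst]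
    | succ m =>
      rw [FormalMultilinearSeries.partialSum, Finset.sum_range_succ,
        q.derivSeries_apply_diag_eq_fderiv, Finset.sum_eq_zero, zero_add]
      intro k hk
      have hzero : (fun z => q (k + 1) fun _ => z) = 0 :=
        funext (hlow (k + 1) (by simpa using hk))
      rw [q.derivSeries_apply_diag_eq_fderiv, hzero, fderiv_zero]
      rfl
  have h := (hr.fderiv.hasFPowerSeriesAt.isBigO_sub_partialSum_pow N).comp_tendsto
    ((continuous_sub_right x).tendsto' x 0 (sub_self x))
  simp only [Function.comp_def, hpartial, add_sub_cancel] at h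
  exact h

theorem clm_fderiv_fderiv_apply_diag_eq_zero (hq : HasFPowerSeriesAt f q x)
    (hlow : ∀ k < N, ∀ y, q k (fun _ => y) = 0) (hN : 2 ≤ N)
    (Φ : (E →L[𝕜] E →L[𝕜] F) →L[𝕜] G) (L : F →L[𝕜] G)
    (heq : ∀ᶠ z in 𝓝 x, Φ (fderiv 𝕜 (fderiv 𝕜 f) z) + L (f z) = 0) (y : E) :
    Φ (fderiv 𝕜 (fderiv 𝕜 fun y => q N fun _ => y) y) = 0 := by
  obtain ⟨m, rfl⟩ : ∃ m, N = m + 2 := ⟨N - 2, by omega⟩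
  obtain ⟨r, hr⟩ := hq
  have hseries := ((Φ.comp_hasFPowerSeriesOnBall hr.fderiv.fderiv).add
    (L.comp_hasFPowerSeriesOnBall hr)).hasFPowerSeriesAt.congr (g := 0)
    (by filter_upwards [heq] with z hz; exact hz)
  have h := hseries.apply_eq_zero m y
  have hderiv2 : q.derivSeries.derivSeries m (fun _ => y) =
      fderiv 𝕜 (fderiv 𝕜 fun y => q (m + 2) fun _ => y) y := by
    rw [q.derivSeries.derivSeries_apply_diag_eq_fderiv]
    congr 1
    ext1 z
    exact q.derivSeries_apply_diag_eq_fderiv (m + 1) z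
  simpa [hderiv2, hlow m (by omega) y] using h

end HasFPowerSeriesAt

section Growth

variable {E F : Type*} [NormedAddCommGroup E] [NormedAddCommGroup F]

theorem ContinuousMultilinearMap.exists_pos_mul_pow_le_norm_apply_diag [NormedSpace ℝ E]
    [FiniteDimensional ℝ E] [Nontrivial E] [NormedSpace ℝ F] {m : ℕ} (A : E [×m]→L[ℝ] F)
    (hA : ∀ y ≠ 0, A (fun _ => y) ≠ 0) : ∃ c > 0, ∀ y, c * ‖y‖ ^ m ≤ ‖A fun _ => y‖ := by
  have hcont : Continuous fun y : E => ‖A fun _ => y‖ :=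
    (A.cont.comp (continuous_pi fun _ => continuous_id)).norm
  obtain ⟨w₀, hw₀, hmin⟩ := (isCompact_sphere (0 : E) 1).exists_isMinOn
    (NormedSpace.sphere_nonempty.2 zero_le_one) hcont.continuousOn
  have hw₀ne : w₀ ≠ 0 := ne_zero_of_mem_unit_sphere ⟨w₀, hw₀⟩
  refine ⟨‖A fun _ => w₀‖, norm_pos_iff.2 (hA w₀ hw₀ne), fun y => ?_⟩
  obtain ⟨w, hw, hyw⟩ : ∃ w ∈ sphere (0 : E) 1, y = ‖y‖ • w := by
    rcases eq_or_ne y 0 with rfl | hy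
    · exact ⟨w₀, hw₀, by simp⟩
    · refine ⟨‖y‖⁻¹ • y, ?_, (smul_inv_smul₀ (norm_ne_zero_iff.2 hy) y).symm⟩
      simp [norm_smul, hy]
  have hsmul : (A fun _ => ‖y‖ • w) = ‖y‖ ^ m • A fun _ => w := by
    simpa using A.map_smul_univ (fun _ => ‖y‖) fun _ => w
  have hnorm : ‖A fun _ => y‖ = ‖y‖ ^ m * ‖A fun _ => w‖ := by
    conv_lhs => rw [hyw]
    rw [hsmul, norm_smul, norm_pow, norm_norm]
  rw [hnorm, mul_comm]
  exact mul_le_mul_of_nonneg_left (hmin hw) (by positivity)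

theorem eventually_ne_zero_of_isBigO_sub {g P : E → F} {p : E} {m : ℕ} {c : ℝ} (hc : 0 < c)
    (hP : ∀ y, c * ‖y‖ ^ m ≤ ‖P y‖)
    (hg : (fun z => g z - P (z - p)) =O[𝓝 p] fun z => ‖z - p‖ ^ (m + 1)) :
    ∀ᶠ z in 𝓝[≠] p, g z ≠ 0 := by
  have hsmall := (hg.trans_isLittleO (isLittleO_pow_sub_pow_sub p m.lt_succ_self)).def
    (half_pos hc)
  filter_upwards [nhdsWithin_le_nhds hsmall, self_mem_nhdsWithin] with z hz hzp hgz
  rw [hgz, zero_sub, norm_neg, norm_pow, norm_norm] at hz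
  have hpos : 0 < ‖z - p‖ ^ m := pow_pos (norm_pos_iff.2 (sub_ne_zero.2 hzp)) m
  nlinarith [hP (z - p)]

end Growth

section Laplacian

variable {E E' F : Type*} [NormedAddCommGroup E] [InnerProductSpace ℝ E] [FiniteDimensional ℝ E]
  [NormedAddCommGroup E'] [InnerProductSpace ℝ E'] [FiniteDimensional ℝ E']
  [NormedAddCommGroup F] [NormedSpace ℝ F]

theorem exists_laplacian_eq_clm_comp_fderiv_fderiv :
    ∃ Φ : (E →L[ℝ] E →L[ℝ] F) →L[ℝ] F, ∀ f : E → F, Δ f = Φ ∘ fderiv ℝ (fderiv ℝ f) := by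
  let b := stdOrthonormalBasis ℝ E
  refine ⟨∑ i, (ContinuousLinearMap.apply ℝ F (b i)).comp
    (ContinuousLinearMap.apply ℝ (E →L[ℝ] F) (b i)), fun f => ?_⟩
  ext x
  simp [laplacian_eq_iteratedFDeriv_orthonormalBasis f b, iteratedFDeriv_two_apply]

theorem laplacian_comp_linearIsometryEquiv (e : E' ≃ₗᵢ[ℝ] E) (f : E → F) :
    Δ (f ∘ e) = Δ f ∘ e := by
  ext x
  let b := stdOrthonormalBasis ℝ E'
  rw [laplacian_eq_iteratedFDeriv_orthonormalBasis (f ∘ e) b,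
    laplacian_eq_iteratedFDeriv_orthonormalBasis f (b.map e)]
  have h := e.toContinuousLinearEquiv.iteratedFDerivWithin_comp_right f uniqueDiffOn_univ
    (mem_univ (e x)) 2
  simp only [preimage_univ, iteratedFDerivWithin_univ,
    LinearIsometryEquiv.coe_toContinuousLinearEquiv] at h
  simp only [h, ContinuousMultilinearMap.compContinuousLinearMap_apply, OrthonormalBasis.map_apply]
  refine Finset.sum_congr rfl fun i _ => congr_arg _ ?_
  ext j
  fin_cases j <;> rfl

theorem InnerProductSpace.HarmonicAt.comp_linearIsometryEquiv {f : E → F} (e : E' ≃ₗᵢ[ℝ] E)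
    {x : E'} (hf : HarmonicAt f (e x)) : HarmonicAt (f ∘ e) x :=
  ⟨hf.1.comp x e.contDiff.contDiffAt, by
    rw [laplacian_comp_linearIsometryEquiv]
    exact hf.2.comp_tendsto (e.continuous.tendsto x)⟩

theorem HasFPowerSeriesAt.harmonicAt_apply_diag [CompleteSpace F] {f : E → F}
    {q : FormalMultilinearSeries ℝ E F} {x : E} {N : ℕ} (hq : HasFPowerSeriesAt f q x)
    (hlow : ∀ k < N, ∀ y, q k (fun _ => y) = 0) (hN : 2 ≤ N) {c : ℝ}
    (heq : ∀ᶠ z in 𝓝 x, Δ f z + c • f z = 0) (y : E) :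
    HarmonicAt (fun y => q N fun _ => y) y := by
  obtain ⟨Φ, hΦ⟩ := exists_laplacian_eq_clm_comp_fderiv_fderiv (E := E) (F := F)
  have hQ : Δ (fun y => q N fun _ => y) = 0 := by
    ext z
    rw [hΦ]
    refine hq.clm_fderiv_fderiv_apply_diag_eq_zero hlow hN Φ (c • ContinuousLinearMap.id ℝ F) ?_ z
    filter_upwards [heq] with z hz
    simpa [hΦ] using hz
  exact ⟨((q N).contDiff.comp (contDiff_pi.2 fun _ => contDiff_id)).contDiffAt, by
    simp [hQ]⟩

end Laplacian

namespace Complex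

theorem fderiv_eq_zero_of_harmonic_of_fderiv_homogeneous {Q : ℂ → ℝ} {n : ℕ}
    (hQ : ∀ z, HarmonicAt Q z)
    (hhom : ∀ (t : ℝ) z, fderiv ℝ Q (t • z) = t ^ n • fderiv ℝ Q z)
    {z₀ : ℂ} (hz₀ : z₀ ≠ 0) (hcrit : fderiv ℝ Q z₀ = 0) : fderiv ℝ Q = 0 := by
  set G : ℂ → ℂ := fun z => fderiv ℝ Q z 1 - I * fderiv ℝ Q z I
  have hG : AnalyticOnNhd ℂ G univ := fun z _ => HarmonicAt.analyticAt_complex_partial (hQ z)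
  have hray : Tendsto (fun t : ℝ => t • z₀) (𝓝[≠] 0) (𝓝[≠] 0) := by
    refine tendsto_nhdsWithin_of_tendsto_nhds_of_eventually_within _ ?_ ?_
    · exact ((continuous_id.smul continuous_const : Continuous fun t : ℝ => t • z₀).tendsto' 0 0
        (zero_smul ℝ z₀)).mono_left nhdsWithin_le_nhds
    · filter_upwards [self_mem_nhdsWithin] with t ht
      exact smul_ne_zero ht hz₀
  have hfreq : ∃ᶠ z in 𝓝[≠] 0, G z = 0 :=
    hray.frequently (Eventually.frequently (Eventually.of_forall fun t => by
      simp only [G, hhom t z₀, hcrit, smul_zero, zero_apply, ofReal_zero,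
        mul_zero, sub_zero]))
  have hG0 := hG.eqOn_zero_of_preconnected_of_frequently_eq_zero isPreconnected_univ
    (mem_univ 0) hfreq
  ext z w
  have hGz : G z = 0 := hG0 (mem_univ z)
  have h1 : fderiv ℝ Q z 1 = 0 := by simpa [G] using congrArg re hGz
  have hI : fderiv ℝ Q z I = 0 := by simpa [G] using congrArg im hGz
  have hw : w = w.re • (1 : ℂ) + w.im • I := by simp [real_smul, re_add_im]
  rw [hw, map_add, map_smul, map_smul, h1, hI]
  simp

end Complex

section Planar

variable {E : Type*} [NormedAddCommGroup E] [InnerProductSpace ℝ E] [FiniteDimensional ℝ E]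

theorem fderiv_eq_zero_of_harmonic_of_fderiv_homogeneous (hE : finrank ℝ E = 2)
    {Q : E → ℝ} {n : ℕ} (hQ : ∀ y, HarmonicAt Q y)
    (hhom : ∀ (t : ℝ) y, fderiv ℝ Q (t • y) = t ^ n • fderiv ℝ Q y)
    {y₀ : E} (hy₀ : y₀ ≠ 0) (hcrit : fderiv ℝ Q y₀ = 0) : fderiv ℝ Q = 0 := by
  let e : ℂ ≃ₗᵢ[ℝ] E := Complex.orthonormalBasisOneI.equiv
    ((stdOrthonormalBasis ℝ E).reindex (finCongr hE)) (Equiv.refl _)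
  have hcomp : ∀ z v, fderiv ℝ (Q ∘ e) z v = fderiv ℝ Q (e z) (e v) := fun z v => by
    simpa using congrArg (· v) (e.toContinuousLinearEquiv.comp_right_fderiv (f := Q) (x := z))
  have h := Complex.fderiv_eq_zero_of_harmonic_of_fderiv_homogeneous (Q := Q ∘ e) (n := n)
    (fun z => (hQ (e z)).comp_linearIsometryEquiv e)
    (fun t z => by ext v; simp only [smul_apply, hcomp, map_smul, hhom])
    (z₀ := e.symm y₀) (by simpa using hy₀) (by ext v; simp [hcomp, hcrit])
  ext y v
  simpa [hcomp] using congrArg (· (e.symm v)) (congrFun h (e.symm y))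

theorem eventually_fderiv_ne_zero_of_laplacian_add_smul_eq_zero (hE : finrank ℝ E = 2)
    {f : E → ℝ} {x : E} {c : ℝ} (hf : AnalyticAt ℝ f x) (hf0 : ¬f =ᶠ[𝓝 x] 0) (hfx : f x = 0)
    (hdfx : fderiv ℝ f x = 0) (heq : ∀ᶠ z in 𝓝 x, Δ f z + c • f z = 0) :
    ∀ᶠ z in 𝓝[≠] x, fderiv ℝ f z ≠ 0 := by
  have : Nontrivial E := Module.nontrivial_of_finrank_eq_succ hE
  obtain ⟨q, hq⟩ := hf
  obtain ⟨N, ⟨y₁, hy₁⟩, hlow⟩ := hq.exists_apply_diag_ne_zero hf0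
  have hN : 2 ≤ N := by
    by_contra! hN
    interval_cases N
    · exact hy₁ (by rw [hq.coeff_zero, hfx])
    · have h1 := congrArg (· y₁) hq.fderiv_eq
      simp only [hdfx, continuousMultilinearCurryFin1_apply, zero_apply] at h1
      exact hy₁ h1.symm
  obtain ⟨m, rfl⟩ : ∃ m, N = m + 1 := ⟨N - 1, by omega⟩
  set Q : E → ℝ := fun y => q (m + 1) fun _ => y
  have hDQ : ∀ y, fderiv ℝ Q y = q.derivSeries m fun _ => y := fun y =>
    (q.derivSeries_apply_diag_eq_fderiv m y).symm
  have hhom : ∀ (t : ℝ) y, fderiv ℝ Q (t • y) = t ^ m • fderiv ℝ Q y := fun t y => by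
    simpa [hDQ] using (q.derivSeries m).map_smul_univ (fun _ => t) fun _ => y
  have hcrit : ∀ y ≠ 0, (q.derivSeries m fun _ => y) ≠ 0 := by
    intro y hy hy0
    have hDQ0 := fderiv_eq_zero_of_harmonic_of_fderiv_homogeneous hE
      (hq.harmonicAt_apply_diag hlow hN heq) hhom hy (by rw [hDQ, hy0])
    have hQdiff : Differentiable ℝ Q :=
      ((q (m + 1)).contDiff.comp (contDiff_pi.2 fun _ => contDiff_id)).differentiable one_ne_zero
    apply hy₁
    show Q y₁ = 0
    rw [is_const_of_fderiv_eq_zero hQdiff (congrFun hDQ0) y₁ 0]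
    exact (q (m + 1)).map_coord_zero 0 rfl
  obtain ⟨C, hC, hlower⟩ := (q.derivSeries m).exists_pos_mul_pow_le_norm_apply_diag hcrit
  simp only [← hDQ] at hlower
  exact eventually_ne_zero_of_isBigO_sub hC hlower (hq.isBigO_fderiv_sub_fderiv_apply_diag hlow)

theorem compl_setOf_singular_mem_codiscreteWithin (hE : finrank ℝ E = 2) {U : Set E}
    {f : E → ℝ} {c : ℝ} (hU : IsOpen U) (hUc : IsPreconnected U) (hf : AnalyticOnNhd ℝ f U)
    (hne : ∃ z ∈ U, f z ≠ 0) (heq : ∀ z ∈ U, Δ f z + c • f z = 0) :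
    {z | f z = 0 ∧ fderiv ℝ f z = 0}ᶜ ∈ codiscreteWithin U := by
  rw [mem_codiscreteWithin_iff_forall_mem_nhdsNE]
  intro x hx
  refine mem_of_superset ?_ subset_union_left
  by_cases hfx : f x = 0
  swap
  · filter_upwards [nhdsWithin_le_nhds ((hf x hx).continuousAt.eventually_ne hfx)] with z hz
    exact fun h => hz h.1
  by_cases hdfx : fderiv ℝ f x = 0
  swap
  · filter_upwards [nhdsWithin_le_nhds ((hf x hx).fderiv.continuousAt.eventually_ne hdfx)]
      with z hz
    exact fun h => hz h.2
  have hf0 : ¬f =ᶠ[𝓝 x] 0 := fun h => by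
    obtain ⟨z, hz, hfz⟩ := hne
    exact hfz (hf.eqOn_zero_of_preconnected_of_eventuallyEq_zero hUc hx h hz)
  filter_upwards [eventually_fderiv_ne_zero_of_laplacian_add_smul_eq_zero hE (hf x hx) hf0 hfx
    hdfx (eventually_of_mem (hU.mem_nhds hx) heq)] with z hz
  exact fun h => hz h.2

end Planar

theorem lap_eq_laplacian (u : E2 → ℝ) : lap u = Δ u := by
  ext z
  rw [laplacian_eq_iteratedFDeriv_orthonormalBasis u (EuclideanSpace.basisFun (Fin 2) ℝ)]
  refine Finset.sum_congr rfl fun i _ => congr_arg _ ?_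
  ext j
  fin_cases j <;> simp

theorem singular_set_finite_general
    (Ω U : Set E2)
    (hΩb : Bornology.IsBounded Ω)
    (hUo : IsOpen U) (hUconn : IsConnected U) (hsub : closure Ω ⊆ U)
    (lam : ℝ)
    (u : E2 → ℝ) (hu : AnalyticOnNhd ℝ u U)
    (hne : ∃ z ∈ U, u z ≠ 0)
    (heq : ∀ z ∈ U, lap u z + lam * u z = 0) :
    {z ∈ closure Ω | u z = 0 ∧ gradient u z = 0}.Finite := by
  have hsing := compl_setOf_singular_mem_codiscreteWithin finrank_euclideanSpace_fin hUo
    hUconn.isPreconnected hu hne (c := lam) fun z hz => by simpa [← lap_eq_laplacian] using heq z hz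
  refine (hΩb.isCompact_closure.finite_sdiff_of_mem_codiscreteWithin
    (codiscreteWithin_mono hsub hsing)).subset ?_
  rintro z ⟨hz, huz, hgrad⟩
  exact ⟨hz, fun h => h ⟨huz, by simpa [gradient] using hgrad⟩⟩

/-- The singular set of the eigenfunction `u` on `closure Ω` is finite. -/
theorem singular_set_finite
    (Ω U : Set E2) (hΩne : Ω.Nonempty) (hΩo : IsOpen Ω)
    (hΩb : Bornology.IsBounded Ω)
    (hUo : IsOpen U) (hUconn : IsConnected U) (hsub : closure Ω ⊆ U)
    (lam : ℝ) (hlam : 0 < lam)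
    (u : E2 → ℝ) (hu : AnalyticOnNhd ℝ u U)
    (hne : ∃ z ∈ U, u z ≠ 0)
    (heq : ∀ z ∈ U, lap u z + lam * u z = 0) :
    {z ∈ closure Ω | u z = 0 ∧ gradient u z = 0}.Finite :=
  singular_set_finite_general Ω U hΩb hUo hUconn hsub lam u hu hne heq
end
end

section
/- Let Ω, U, λ, u be as in the setting, and let z₀ ∈ closure(Ω) satisfy u(z₀) = 0 and ∇u(z₀) = 0. Then (a) z₀ is an isolated critical point of u: there exists ε > 0 such that z₀ is the only point w in the open ball of radius ε around z₀ with ∇u(w) = 0; and (b) z₀ is neither a local minimum point nor a local maximum point of u (i.e., neither IsLocalMin u z₀ nor IsLocalMax u z₀ holds). -/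
/-!
Near `z₀` the function `u` is analytic and, by the identity theorem, not locally zero, so it has a
lowest nonvanishing homogeneous Taylor polynomial `P`, of some degree `N ≥ 1` since `u z₀ = 0`.
Differentiating `Δu + λu = 0` gives `ΔP = -λ·(Taylor polynomial of degree N - 2) = 0`, so `P` is a
harmonic homogeneous polynomial: `P y = Re (c (y₀ + i y₁) ^ N) / N!` with `c ≠ 0`. Hence
`∂₀u - i ∂₁u = c (y₀ + i y₁) ^ (N - 1) / (N - 1)! + O(‖y‖ ^ N)` has no zero on a punctured disc
around `z₀`, and along the rays where `c (y₀ + i y₁) ^ N = ± ‖c‖` the function `u` takes both signs.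
-/

open Metric Set Filter Topology MeasureTheory

noncomputable section

open TopologicalSpace Asymptotics
open scoped Nat

section Taylor

variable {𝕜 E F : Type*} [NontriviallyNormedField 𝕜] [CharZero 𝕜]
  [NormedAddCommGroup E] [NormedSpace 𝕜 E] [NormedAddCommGroup F] [NormedSpace 𝕜 F]
  [CompleteSpace F] {g : E → F} {z : E}

lemma AnalyticAt.isBigO_sub_iteratedFDeriv (hg : AnalyticAt 𝕜 g z) {n : ℕ}
    (hvan : ∀ k < n, ∀ y, iteratedFDeriv 𝕜 k g z (fun _ => y) = 0) :
    (fun y => g (z + y) - (n ! : 𝕜)⁻¹ • iteratedFDeriv 𝕜 n g z (fun _ => y))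
      =O[𝓝 0] fun y => ‖y‖ ^ (n + 1) := by
  obtain ⟨p, r, hp⟩ := hg
  have hterm : ∀ k y, p k (fun _ => y) = (k ! : 𝕜)⁻¹ • iteratedFDeriv 𝕜 k g z (fun _ => y) := by
    intro k y
    rw [← hp.factorial_smul y k, ← Nat.cast_smul_eq_nsmul 𝕜, smul_smul,
      inv_mul_cancel₀ (Nat.cast_ne_zero.mpr k.factorial_ne_zero), one_smul]
  have hpartial : ∀ y, p.partialSum (n + 1) y
      = (n ! : 𝕜)⁻¹ • iteratedFDeriv 𝕜 n g z (fun _ => y) := by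
    intro y
    rw [FormalMultilinearSeries.partialSum, Finset.sum_range_succ,
      Finset.sum_eq_zero fun k hk => by rw [hterm, hvan k (Finset.mem_range.mp hk), smul_zero],
      zero_add, hterm]
  simpa only [hpartial] using hp.hasFPowerSeriesAt.isBigO_sub_partialSum_pow (n + 1)

lemma AnalyticAt.eventuallyEq_zero_of_iteratedFDeriv_eq_zero (hg : AnalyticAt 𝕜 g z)
    (hvan : ∀ n y, iteratedFDeriv 𝕜 n g z (fun _ => y) = 0) : g =ᶠ[𝓝 z] 0 := by
  obtain ⟨p, r, hp⟩ := hg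
  filter_upwards [Metric.eball_mem_nhds z hp.r_pos] with w hw
  have hsum := hp.hasSum_iteratedFDeriv (y := w - z) (by simpa [edist_dist, dist_eq_norm] using hw)
  simp only [hvan, smul_zero, add_sub_cancel] at hsum
  exact hsum.unique hasSum_zero

end Taylor

section Asymptotics

variable {E F : Type*} [NormedAddCommGroup E] [NormedAddCommGroup F]

lemma eventually_norm_sub_lt_of_isBigO_pow {f P : E → F} {m : ℕ} {K : ℝ} (hK : 0 < K)
    (hP : ∀ y, K * ‖y‖ ^ m ≤ ‖P y‖) (h : (fun y => f y - P y) =O[𝓝 0] fun y => ‖y‖ ^ (m + 1)) :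
    ∀ᶠ y in 𝓝[≠] 0, ‖f y - P y‖ < ‖P y‖ := by
  have hsmall := (h.trans_isLittleO (isLittleO_norm_pow_norm_pow m.lt_succ_self)).bound
    (half_pos hK)
  filter_upwards [nhdsWithin_le_nhds hsmall, self_mem_nhdsWithin] with y hy hy0
  have hpos : 0 < K * ‖y‖ ^ m := mul_pos hK (pow_pos (norm_pos_iff.mpr hy0) m)
  rw [norm_pow, norm_norm] at hy
  linarith [hP y]

variable [NormedSpace ℝ E]

lemma isBigO_comp_smul {f P : E → F} {n : ℕ}
    (h : (fun y => f y - P y) =O[𝓝 0] fun y => ‖y‖ ^ n) (v : E) :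
    (fun t : ℝ => f (t • v) - P (t • v)) =O[𝓝 0] fun t => ‖t‖ ^ n := by
  have hv : Tendsto (fun t : ℝ => t • v) (𝓝 0) (𝓝 0) :=
    (continuous_id.smul continuous_const).tendsto' 0 0 (zero_smul ℝ v)
  refine (h.comp_tendsto hv).trans (IsBigO.of_bound (‖v‖ ^ n) (Eventually.of_forall fun t => ?_))
  simp [norm_smul, mul_pow, mul_comm]

lemma not_isLocalMax_of_eventually_lt {g : E → ℝ} {z v : E}
    (h : ∀ᶠ t in 𝓝[>] (0 : ℝ), g z < g (z + t • v)) : ¬ IsLocalMax g z := by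
  intro hmax
  have hray : Tendsto (fun t : ℝ => z + t • v) (𝓝[>] 0) (𝓝 z) :=
    ((continuous_const.add (continuous_id.smul continuous_const)).tendsto' 0 z
      (by simp)).mono_left nhdsWithin_le_nhds
  obtain ⟨t, hlt, hle⟩ := (h.and (hray.eventually hmax)).exists
  exact hle.not_gt hlt

end Asymptotics

lemma IsOpen.indicator_eventuallyEq {X M : Type*} [TopologicalSpace X] [Zero M] {t : Set X}
    (ht : IsOpen t) {f : X → M} {z : X} (hz : z ∈ t) : t.indicator f =ᶠ[𝓝 z] f :=
  eventually_of_mem (ht.mem_nhds hz) fun _ hy => indicator_of_mem hy f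

section DirectionalDerivative

variable {E : Type*} [NormedAddCommGroup E] [NormedSpace ℝ E] (s : Opens E)

/-- Cutting functions off outside `s` makes the directional derivatives honest linear operators,
which commute in the ring `Module.End ℝ (analyticVanishingOff s)`. -/
def analyticVanishingOff : Submodule ℝ (E → ℝ) where
  carrier := {g | AnalyticOnNhd ℝ g s ∧ EqOn g 0 sᶜ}
  add_mem' hf hg := ⟨hf.1.add hg.1, fun z hz => by simp [hf.2 hz, hg.2 hz]⟩
  zero_mem' := ⟨analyticOnNhd_const, fun _ _ => rfl⟩
  smul_mem' c g hg := ⟨hg.1.const_smul, fun z hz => by simp [hg.2 hz]⟩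

variable {s} in
lemma indicator_mem_analyticVanishingOff {g : E → ℝ} (hg : AnalyticOnNhd ℝ g s) :
    (s : Set E).indicator g ∈ analyticVanishingOff s :=
  ⟨fun z hz => (hg z hz).congr (s.isOpen.indicator_eventuallyEq hz).symm,
    fun _ hz => indicator_of_notMem hz g⟩

def dirDeriv : E →ₗ[ℝ] Module.End ℝ (analyticVanishingOff s) :=
  LinearMap.mk₂ ℝ
    (fun v g => ⟨(s : Set E).indicator fun z => fderiv ℝ g z v,
      indicator_mem_analyticVanishingOff fun z hz =>
        (ContinuousLinearMap.apply ℝ ℝ v).comp_analyticOnNhd g.2.1.fderiv z hz⟩)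
    (fun v w g => by ext z; by_cases hz : z ∈ s <;> simp [hz, indicator])
    (fun c v g => by ext z; by_cases hz : z ∈ s <;> simp [hz, indicator])
    (fun v g h => by
      ext z
      by_cases hz : z ∈ s
      · simp [hz, fderiv_add (g.2.1 z hz).differentiableAt (h.2.1 z hz).differentiableAt]
      · simp [hz])
    (fun c v g => by
      ext z
      by_cases hz : z ∈ s
      · simp [hz, fderiv_const_smul (g.2.1 z hz).differentiableAt]
      · simp [hz])

variable {s}

lemma dirDeriv_apply_of_mem (v : E) (g : analyticVanishingOff s) {z : E} (hz : z ∈ s) :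
    (dirDeriv s v g : E → ℝ) z = fderiv ℝ g z v :=
  show (s : Set E).indicator (fun y => fderiv ℝ (g : E → ℝ) y v) z = _ from indicator_of_mem hz _

lemma dirDeriv_eventuallyEq (v : E) (g : analyticVanishingOff s) {z : E} (hz : z ∈ s) :
    (dirDeriv s v g : E → ℝ) =ᶠ[𝓝 z] fun y => fderiv ℝ g y v :=
  s.isOpen.indicator_eventuallyEq hz

lemma commute_dirDeriv (v w : E) : Commute (dirDeriv s v) (dirDeriv s w) := by
  ext g z
  simp only [Module.End.mul_apply]
  by_cases hz : z ∈ s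
  · have hsecond : ∀ a b : E, (dirDeriv s a (dirDeriv s b g) : E → ℝ) z
        = fderiv ℝ (fderiv ℝ g) z a b := by
      intro a b
      rw [dirDeriv_apply_of_mem a _ hz, (dirDeriv_eventuallyEq b g hz).fderiv_eq,
        fderiv_clm_apply ((g.2.1.fderiv z hz).differentiableAt) (differentiableAt_const b)]
      simp
    rw [hsecond, hsecond, ((g.2.1 z hz).contDiffAt.isSymmSndFDerivAt le_top).eq]
  · rw [(dirDeriv s v _).2.2 hz, (dirDeriv s w _).2.2 hz]

lemma iteratedFDeriv_apply_const_eq_dirDeriv_pow (v : E) {z : E} (hz : z ∈ s) (n : ℕ)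
    (g : analyticVanishingOff s) :
    iteratedFDeriv ℝ n g z (fun _ => v) = ((dirDeriv s v ^ n) g : E → ℝ) z := by
  induction n generalizing g with
  | zero => simp
  | succ n ih =>
    have hcd : ContDiffOn ℝ n (fderiv ℝ (g : E → ℝ)) s :=
      g.2.1.fderiv.contDiffOn s.isOpen.uniqueDiffOn
    calc iteratedFDeriv ℝ (n + 1) g z (fun _ => v)
        = iteratedFDeriv ℝ n (fderiv ℝ (g : E → ℝ)) z (fun _ => v) v := by
          rw [iteratedFDeriv_succ_apply_right]; rfl
      _ = iteratedFDeriv ℝ n (fun y => fderiv ℝ (g : E → ℝ) y v) z (fun _ => v) := by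
        rw [← iteratedFDerivWithin_of_isOpen n s.isOpen hz,
          ← iteratedFDerivWithin_of_isOpen n s.isOpen hz]
        exact (iteratedFDerivWithin_clm_apply_const_apply s.isOpen.uniqueDiffOn hcd le_rfl hz).symm
      _ = iteratedFDeriv ℝ n (dirDeriv s v g : E → ℝ) z (fun _ => v) := by
        rw [((dirDeriv_eventuallyEq v g hz).iteratedFDeriv ℝ n).eq_of_nhds]
      _ = _ := by rw [ih, pow_succ, Module.End.mul_apply]

end DirectionalDerivative

section Plane

open Complex (I)

def planeToComplex : E2 ≃ₗᵢ[ℝ] ℂ := Complex.orthonormalBasisOneI.repr.symm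

lemma planeToComplex_apply (y : E2) : planeToComplex y = y 0 + y 1 * I :=
  Complex.orthonormalBasisOneI_repr_symm_apply y

lemma re_mul_planeToComplex_pow (d : ℂ) (y : E2) (n : ℕ) :
    (d * planeToComplex y ^ n).re
      = ∑ k ∈ Finset.range (n + 1), y 1 ^ k * y 0 ^ (n - k) * n.choose k * (d * I ^ k).re := by
  rw [planeToComplex_apply, add_comm, add_pow, Finset.mul_sum, Complex.re_sum]
  refine Finset.sum_congr rfl fun k _ => ?_
  rw [show d * ((y 1 * I) ^ k * (y 0 : ℂ) ^ (n - k) * n.choose k)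
      = ((y 1 ^ k * y 0 ^ (n - k) * n.choose k : ℝ) : ℂ) * (d * I ^ k) by push_cast; ring,
    Complex.re_ofReal_mul]

lemma eq_re_mul_I_pow_of_add_two_eq_neg {a : ℕ → ℝ} {N : ℕ}
    (h : ∀ k, k + 2 ≤ N → a (k + 2) = -a k) : ∀ k ≤ N, a k = ((a 0 - a 1 * I) * I ^ k).re := by
  intro k
  induction k using Nat.twoStepInduction with
  | zero => simp
  | one => simp
  | more k ih _ =>
    intro hk
    rw [h k hk, ih (by omega), pow_add, Complex.I_sq]
    simp

lemma not_isLocalMax_of_isBigO_re_mul_pow {g : E2 → ℝ} {z : E2} {n : ℕ} {d : ℂ} (hn : n ≠ 0)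
    (hd : d ≠ 0) (hgz : g z = 0)
    (h : (fun y => g (z + y) - (n ! : ℝ)⁻¹ * (d * planeToComplex y ^ n).re)
      =O[𝓝 0] fun y => ‖y‖ ^ (n + 1)) :
    ¬ IsLocalMax g z := by
  obtain ⟨ζ, hζ⟩ := IsAlgClosed.exists_pow_nat_eq ((‖d‖ : ℂ) / d) (Nat.pos_of_ne_zero hn)
  set v := planeToComplex.symm ζ
  set a := (n ! : ℝ)⁻¹ * ‖d‖
  have ha : 0 < a := by positivity
  have hray : ∀ t : ℝ, (n ! : ℝ)⁻¹ * (d * planeToComplex (t • v) ^ n).re = a * t ^ n := by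
    intro t
    rw [map_smul, LinearIsometryEquiv.apply_symm_apply, Complex.real_smul, mul_pow, mul_left_comm,
      hζ, mul_div_cancel₀ _ hd, ← Complex.ofReal_pow, ← Complex.ofReal_mul, Complex.ofReal_re]
    ring
  have hO := isBigO_comp_smul (f := fun y => g (z + y)) h v
  simp only [hray] at hO
  have hlt := eventually_norm_sub_lt_of_isBigO_pow (P := fun t => a * t ^ n) ha
    (fun t => by simp [abs_of_pos ha]) hO
  refine not_isLocalMax_of_eventually_lt (v := v) ?_
  filter_upwards [nhdsWithin_mono _ (fun t (ht : 0 < t) => ht.ne') hlt, self_mem_nhdsWithin]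
    with t ht (htpos : 0 < t)
  have hpos : 0 < a * t ^ n := by positivity
  rw [Real.norm_eq_abs, Real.norm_eq_abs, abs_of_pos hpos] at ht
  linarith [(abs_lt.1 ht).1]

lemma not_isLocalMin_of_isBigO_re_mul_pow {g : E2 → ℝ} {z : E2} {n : ℕ} {d : ℂ} (hn : n ≠ 0)
    (hd : d ≠ 0) (hgz : g z = 0)
    (h : (fun y => g (z + y) - (n ! : ℝ)⁻¹ * (d * planeToComplex y ^ n).re)
      =O[𝓝 0] fun y => ‖y‖ ^ (n + 1)) :
    ¬ IsLocalMin g z := fun hmin =>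
  not_isLocalMax_of_isBigO_re_mul_pow (g := -g) (d := -d) hn (neg_ne_zero.2 hd) (by simp [hgz])
    (h.neg_left.congr_left fun y => by simp only [Pi.neg_apply, neg_mul, Complex.neg_re]; ring)
    hmin.neg

lemma eventually_ne_zero_or_ne_zero_of_isBigO {g₁ g₂ : E2 → ℝ} {z : E2} {m : ℕ} {d : ℂ}
    (hd : d ≠ 0)
    (h₁ : (fun y => g₁ (z + y) - (m ! : ℝ)⁻¹ * (d * planeToComplex y ^ m).re)
      =O[𝓝 0] fun y => ‖y‖ ^ (m + 1))
    (h₂ : (fun y => g₂ (z + y) - (m ! : ℝ)⁻¹ * (d * I * planeToComplex y ^ m).re)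
      =O[𝓝 0] fun y => ‖y‖ ^ (m + 1)) :
    ∀ᶠ y in 𝓝[≠] 0, g₁ (z + y) ≠ 0 ∨ g₂ (z + y) ≠ 0 := by
  -- `Re w - i Re (i w) = w`, so `g₁ - i g₂` is asymptotic to `d ζ ^ m / m!` with `ζ = y₀ + i y₁`
  set P : E2 → ℂ := fun y => (m ! : ℂ)⁻¹ * (d * planeToComplex y ^ m)
  have hsplit : ∀ y, ((g₁ (z + y) : ℂ) - I * g₂ (z + y)) - P y
      = ((g₁ (z + y) - (m ! : ℝ)⁻¹ * (d * planeToComplex y ^ m).re : ℝ) : ℂ)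
        - I * ((g₂ (z + y) - (m ! : ℝ)⁻¹ * (d * I * planeToComplex y ^ m).re : ℝ) : ℂ) := by
    intro y
    apply Complex.ext <;> simp [P]
    ring
  have hO : (fun y => ((g₁ (z + y) : ℂ) - I * g₂ (z + y)) - P y)
      =O[𝓝 0] fun y => ‖y‖ ^ (m + 1) := by
    simp only [hsplit]
    exact (Complex.isBigO_ofReal_left.2 h₁).sub ((Complex.isBigO_ofReal_left.2 h₂).const_mul_left I)
  have hP : ∀ y, (m ! : ℝ)⁻¹ * ‖d‖ * ‖y‖ ^ m ≤ ‖P y‖ := fun y => by simp [P, mul_assoc]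
  filter_upwards [eventually_norm_sub_lt_of_isBigO_pow (by positivity) hP hO] with y hy
  by_contra! h0
  simp [h0.1, h0.2] at hy

variable {s : Opens E2}

variable (s) in
def mixedPartial (j k : ℕ) : Module.End ℝ (analyticVanishingOff s) :=
  dirDeriv s (EuclideanSpace.single 0 1) ^ j * dirDeriv s (EuclideanSpace.single 1 1) ^ k

lemma mixedPartial_mul (j k j' k' : ℕ) :
    mixedPartial s j k * mixedPartial s j' k' = mixedPartial s (j + j') (k + k') := by
  simp only [mixedPartial, pow_add, mul_assoc]
  rw [← mul_assoc (_ ^ k), ((commute_dirDeriv _ _).pow_pow k j').eq, mul_assoc]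

lemma mixedPartial_apply_dirDeriv_fst (g : analyticVanishingOff s) (j k : ℕ) :
    mixedPartial s j k (dirDeriv s (EuclideanSpace.single 0 1) g) = mixedPartial s (j + 1) k g := by
  have h := mixedPartial_mul (s := s) j k 1 0
  rw [add_zero] at h
  rw [← h, Module.End.mul_apply]
  simp [mixedPartial]

lemma mixedPartial_apply_dirDeriv_snd (g : analyticVanishingOff s) (j k : ℕ) :
    mixedPartial s j k (dirDeriv s (EuclideanSpace.single 1 1) g) = mixedPartial s j (k + 1) g := by
  have h := mixedPartial_mul (s := s) j k 0 1
  rw [add_zero] at h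
  rw [← h, Module.End.mul_apply]
  simp [mixedPartial]

lemma dirDeriv_pow_eq_sum (w : E2) (n : ℕ) :
    dirDeriv s w ^ n = ∑ k ∈ Finset.range (n + 1),
      (w 1 ^ k * w 0 ^ (n - k) * n.choose k) • mixedPartial s (n - k) k := by
  have hw : dirDeriv s w = w 1 • dirDeriv s (EuclideanSpace.single 1 1)
      + w 0 • dirDeriv s (EuclideanSpace.single 0 1) := by
    conv_lhs => rw [show w = w 1 • EuclideanSpace.single 1 1 + w 0 • EuclideanSpace.single 0 1 by
      ext i; fin_cases i <;> simp]
    rw [map_add, map_smul, map_smul]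
  rw [hw, (((commute_dirDeriv _ _).smul_left _).smul_right _).add_pow]
  refine Finset.sum_congr rfl fun k _ => ?_
  rw [smul_pow, smul_pow, smul_mul_smul, ((commute_dirDeriv _ _).pow_pow _ _).eq,
    ← nsmul_eq_mul', ← Nat.cast_smul_eq_nsmul ℝ, smul_smul, mixedPartial, mul_comm (n.choose k : ℝ)]

lemma iteratedFDeriv_eq_sum_mixedPartial (g : analyticVanishingOff s) {z : E2} (hz : z ∈ s)
    (y : E2) (n : ℕ) :
    iteratedFDeriv ℝ n g z (fun _ => y) = ∑ k ∈ Finset.range (n + 1),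
      y 1 ^ k * y 0 ^ (n - k) * n.choose k * (mixedPartial s (n - k) k g : E2 → ℝ) z := by
  rw [iteratedFDeriv_apply_const_eq_dirDeriv_pow y hz, dirDeriv_pow_eq_sum]
  simp

lemma lap_eq_mixedPartial (g : analyticVanishingOff s) {z : E2} (hz : z ∈ s) :
    lap g z = (mixedPartial s 2 0 g : E2 → ℝ) z + (mixedPartial s 0 2 g : E2 → ℝ) z := by
  simp [lap, Fin.sum_univ_two, iteratedFDeriv_apply_const_eq_dirDeriv_pow _ hz, mixedPartial]

lemma Filter.EventuallyEq.lap_eq {f g : E2 → ℝ} {z : E2} (h : f =ᶠ[𝓝 z] g) : lap f z = lap g z := by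
  simp only [lap, (h.iteratedFDeriv ℝ 2).eq_of_nhds]

lemma mixedPartial_helmholtz_of_lap {g : analyticVanishingOff s} {lam : ℝ}
    (heq : ∀ z ∈ s, lap g z + lam * (g : E2 → ℝ) z = 0) :
    mixedPartial s 2 0 g + mixedPartial s 0 2 g + lam • g = 0 := by
  ext z
  by_cases hz : z ∈ s
  · simpa [← lap_eq_mixedPartial g hz] using heq z hz
  · simp [(mixedPartial s 2 0 g).2.2 hz, (mixedPartial s 0 2 g).2.2 hz, g.2.2 hz]

lemma mixedPartial_helmholtz {g : analyticVanishingOff s} {lam : ℝ}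
    (hpde : mixedPartial s 2 0 g + mixedPartial s 0 2 g + lam • g = 0) (j k : ℕ) :
    mixedPartial s (j + 2) k g + mixedPartial s j (k + 2) g + lam • mixedPartial s j k g = 0 := by
  have := congrArg (mixedPartial s j k) hpde
  rwa [map_add, map_add, map_smul, map_zero, ← Module.End.mul_apply, ← Module.End.mul_apply,
    mixedPartial_mul, mixedPartial_mul, add_zero, add_zero] at this

lemma exists_mixedPartial_ne_zero (g : analyticVanishingOff s) (hs : IsPreconnected (s : Set E2))
    {z : E2} (hz : z ∈ s) (hne : ∃ w ∈ s, (g : E2 → ℝ) w ≠ 0) :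
    ∃ j k, (mixedPartial s j k g : E2 → ℝ) z ≠ 0 := by
  by_contra! hzero
  obtain ⟨w, hw, hgw⟩ := hne
  have hloc : (g : E2 → ℝ) =ᶠ[𝓝 z] 0 :=
    (g.2.1 z hz).eventuallyEq_zero_of_iteratedFDeriv_eq_zero fun n y => by
      simp [iteratedFDeriv_eq_sum_mixedPartial g hz, hzero]
  exact hgw (g.2.1.eqOn_zero_of_preconnected_of_eventuallyEq_zero hs hz hloc hw)

variable (s) in
/-- The Taylor polynomials of `g` at `z` vanish in degrees `< n`, and the one of degree `n`,
`y ↦ ∑ₖ (n choose k) y₀ ^ (n - k) y₁ ^ k ∂₀ ^ (n - k) ∂₁ ^ k g z / n!`,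
is `y ↦ Re (d (y₀ + i y₁) ^ n) / n!`. -/
structure HasHarmonicLeadingTerm (g : analyticVanishingOff s) (z : E2) (n : ℕ) (d : ℂ) : Prop where
  eq_zero : ∀ j k, j + k < n → (mixedPartial s j k g : E2 → ℝ) z = 0
  eq_re : ∀ k ≤ n, (mixedPartial s (n - k) k g : E2 → ℝ) z = (d * I ^ k).re

namespace HasHarmonicLeadingTerm

variable {g : analyticVanishingOff s} {z : E2} {n : ℕ} {d : ℂ}

lemma isBigO (h : HasHarmonicLeadingTerm s g z n d) (hz : z ∈ s) :
    (fun y => (g : E2 → ℝ) (z + y) - (n ! : ℝ)⁻¹ * (d * planeToComplex y ^ n).re)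
      =O[𝓝 0] fun y => ‖y‖ ^ (n + 1) := by
  have hvan : ∀ m < n, ∀ y, iteratedFDeriv ℝ m (g : E2 → ℝ) z (fun _ => y) = 0 := fun m hm y => by
    rw [iteratedFDeriv_eq_sum_mixedPartial g hz]
    refine Finset.sum_eq_zero fun k hk => ?_
    rw [h.eq_zero _ _ (by have := Finset.mem_range.1 hk; omega), mul_zero]
  have hlead : ∀ y, iteratedFDeriv ℝ n (g : E2 → ℝ) z (fun _ => y)
      = (d * planeToComplex y ^ n).re := by
    intro y
    rw [iteratedFDeriv_eq_sum_mixedPartial g hz, re_mul_planeToComplex_pow]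
    exact Finset.sum_congr rfl fun k hk => by
      rw [h.eq_re k (by have := Finset.mem_range.1 hk; omega)]
  simpa [hlead] using (g.2.1 z hz).isBigO_sub_iteratedFDeriv hvan

lemma dirDeriv_fst (h : HasHarmonicLeadingTerm s g z n d) (hn : n ≠ 0) :
    HasHarmonicLeadingTerm s (dirDeriv s (EuclideanSpace.single 0 1) g) z (n - 1) d where
  eq_zero j k hjk := by rw [mixedPartial_apply_dirDeriv_fst]; exact h.eq_zero _ _ (by omega)
  eq_re k hk := by
    rw [mixedPartial_apply_dirDeriv_fst, show n - 1 - k + 1 = n - k by omega]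
    exact h.eq_re k (by omega)

lemma dirDeriv_snd (h : HasHarmonicLeadingTerm s g z n d) (hn : n ≠ 0) :
    HasHarmonicLeadingTerm s (dirDeriv s (EuclideanSpace.single 1 1) g) z (n - 1) (d * I) where
  eq_zero j k hjk := by rw [mixedPartial_apply_dirDeriv_snd]; exact h.eq_zero _ _ (by omega)
  eq_re k hk := by
    rw [mixedPartial_apply_dirDeriv_snd, show n - 1 - k = n - (k + 1) by omega,
      h.eq_re (k + 1) (by omega), pow_succ]
    ring_nf

lemma eventually_fderiv_ne_zero (h : HasHarmonicLeadingTerm s g z n d) (hz : z ∈ s) (hn : n ≠ 0)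
    (hd : d ≠ 0) : ∀ᶠ w in 𝓝[≠] z, fderiv ℝ (g : E2 → ℝ) w ≠ 0 := by
  have hne := eventually_ne_zero_or_ne_zero_of_isBigO hd ((h.dirDeriv_fst hn).isBigO hz)
    ((h.dirDeriv_snd hn).isBigO hz)
  have hsub : Tendsto (fun w => w - z) (𝓝[≠] z) (𝓝[≠] 0) :=
    tendsto_nhdsWithin_iff.2 ⟨((continuous_sub_right z).tendsto' z 0 (sub_self z)).mono_left
      nhdsWithin_le_nhds, eventually_nhdsWithin_of_forall fun w hw => sub_ne_zero.2 hw⟩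
  filter_upwards [hsub.eventually hne, nhdsWithin_le_nhds (s.isOpen.mem_nhds hz)]
    with w hw hws hfd
  simp [dirDeriv_apply_of_mem _ _ hws, hfd] at hw

end HasHarmonicLeadingTerm

lemma exists_hasHarmonicLeadingTerm (g : analyticVanishingOff s) (hs : IsPreconnected (s : Set E2))
    {z : E2} (hz : z ∈ s) (hgz : (g : E2 → ℝ) z = 0) (hne : ∃ w ∈ s, (g : E2 → ℝ) w ≠ 0)
    {lam : ℝ} (hpde : mixedPartial s 2 0 g + mixedPartial s 0 2 g + lam • g = 0) :
    ∃ N c, N ≠ 0 ∧ c ≠ 0 ∧ HasHarmonicLeadingTerm s g z N c := by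
  classical
  have hex : ∃ N j k, j + k = N ∧ (mixedPartial s j k g : E2 → ℝ) z ≠ 0 := by
    obtain ⟨j, k, hjk⟩ := exists_mixedPartial_ne_zero g hs hz hne
    exact ⟨_, j, k, rfl, hjk⟩
  set N := Nat.find hex
  obtain ⟨j₀, k₀, hjk₀, hne₀⟩ := Nat.find_spec hex
  have hvan : ∀ j k, j + k < N → (mixedPartial s j k g : E2 → ℝ) z = 0 := fun j k hjk => by
    by_contra hne
    exact Nat.find_min hex hjk ⟨j, k, rfl, hne⟩
  have hN : N ≠ 0 := by
    intro hN
    obtain ⟨rfl, rfl⟩ : j₀ = 0 ∧ k₀ = 0 := by omega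
    exact hne₀ (by simpa [mixedPartial] using hgz)
  set a : ℕ → ℝ := fun k => (mixedPartial s (N - k) k g : E2 → ℝ) z
  -- the Helmholtz equation in degree `N - 2`, whose `lam`-term is below the leading degree
  have hrec : ∀ k, k + 2 ≤ N → a (k + 2) = -a k := fun k hk => by
    have := congrArg (fun f : analyticVanishingOff s => (f : E2 → ℝ) z)
      (mixedPartial_helmholtz hpde (N - (k + 2)) k)
    simp only [Submodule.coe_add, Submodule.coe_smul, Pi.add_apply, Pi.smul_apply, smul_eq_mul,
      ZeroMemClass.coe_zero, Pi.zero_apply, hvan (N - (k + 2)) k (by omega), mul_zero,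
      add_zero, show N - (k + 2) + 2 = N - k by omega] at this
    simp only [a]
    linarith
  have ha := eq_re_mul_I_pow_of_add_two_eq_neg hrec
  refine ⟨N, a 0 - a 1 * I, hN, fun hc => hne₀ ?_, hvan, ha⟩
  have := ha k₀ (by omega)
  rw [hc, zero_mul, Complex.zero_re] at this
  simpa [a, show N - k₀ = j₀ by omega] using this

end Plane

theorem singular_point_isolated_saddle_general
    (Ω U : Set E2)
    (hUo : IsOpen U) (hUconn : IsConnected U) (hsub : closure Ω ⊆ U)
    (lam : ℝ)
    (u : E2 → ℝ) (hu : AnalyticOnNhd ℝ u U)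
    (hne : ∃ z ∈ U, u z ≠ 0)
    (heq : ∀ z ∈ U, lap u z + lam * u z = 0)
    (z₀ : E2) (hz₀ : z₀ ∈ closure Ω) (hu0 : u z₀ = 0) :
    (∃ ε > 0, ∀ w ∈ ball z₀ ε, gradient u w = 0 → w = z₀) ∧
      ¬ IsLocalMin u z₀ ∧ ¬ IsLocalMax u z₀ := by
  set s : Opens E2 := ⟨U, hUo⟩
  have hz₀s : z₀ ∈ s := hsub hz₀
  set g : analyticVanishingOff s := ⟨U.indicator u, indicator_mem_analyticVanishingOff hu⟩
  have hgu : ∀ z ∈ U, (g : E2 → ℝ) =ᶠ[𝓝 z] u := fun z hz => hUo.indicator_eventuallyEq hz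
  have hgz₀ : (g : E2 → ℝ) z₀ = 0 := (hgu z₀ hz₀s).eq_of_nhds.trans hu0
  have hpde := mixedPartial_helmholtz_of_lap (g := g) (lam := lam) fun z hz => by
    rw [(hgu z hz).lap_eq, (hgu z hz).eq_of_nhds]
    exact heq z hz
  obtain ⟨N, c, hN, hc, hlead⟩ := exists_hasHarmonicLeadingTerm g hUconn.isPreconnected hz₀s hgz₀
    (by obtain ⟨w, hw, huw⟩ := hne; exact ⟨w, hw, (hgu w hw).eq_of_nhds ▸ huw⟩) hpde
  have hO := hlead.isBigO hz₀s
  refine ⟨?_, fun hmin => ?_, fun hmax => ?_⟩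
  · obtain ⟨ε, hε, hball⟩ := Metric.mem_nhdsWithin_iff.1
      (inter_mem (hlead.eventually_fderiv_ne_zero hz₀s hN hc)
        (nhdsWithin_le_nhds (hUo.mem_nhds hz₀s)))
    refine ⟨ε, hε, fun w hw hgrad => by_contra fun hwz => (hball ⟨hw, hwz⟩).1 ?_⟩
    rw [(hgu w (hball ⟨hw, hwz⟩).2).fderiv_eq, ← toDual_gradient, hgrad, map_zero]
  · exact not_isLocalMin_of_isBigO_re_mul_pow hN hc hgz₀ hO ((hgu z₀ hz₀s).isLocalMin_iff.2 hmin)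
  · exact not_isLocalMax_of_isBigO_re_mul_pow hN hc hgz₀ hO ((hgu z₀ hz₀s).isLocalMax_iff.2 hmax)

/-- Every singular point of `u` in `closure Ω` is an isolated critical point and
is neither a local minimum nor a local maximum point of `u`. -/
theorem singular_point_isolated_saddle
    (Ω U : Set E2) (hΩne : Ω.Nonempty) (hΩo : IsOpen Ω)
    (hΩb : Bornology.IsBounded Ω)
    (hUo : IsOpen U) (hUconn : IsConnected U) (hsub : closure Ω ⊆ U)
    (lam : ℝ) (hlam : 0 < lam)
    (u : E2 → ℝ) (hu : AnalyticOnNhd ℝ u U)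
    (hne : ∃ z ∈ U, u z ≠ 0)
    (heq : ∀ z ∈ U, lap u z + lam * u z = 0)
    (z₀ : E2) (hz₀ : z₀ ∈ closure Ω) (hu0 : u z₀ = 0) (hg0 : gradient u z₀ = 0) :
    (∃ ε > 0, ∀ w ∈ ball z₀ ε, gradient u w = 0 → w = z₀) ∧
      ¬ IsLocalMin u z₀ ∧ ¬ IsLocalMax u z₀ :=
  singular_point_isolated_saddle_general Ω U hUo hUconn hsub lam u hu hne heq z₀ hz₀ hu0
end
end

section
/- Let U ⊆ ℝ² be open, let u : ℝ² → ℝ be differentiable on U, let z₀ ∈ U, let σ > 0 with the open ball of radius σ around z₀ contained in U, and suppose there are constants C > 0 and ρ ∈ [1/2, 1) such that ‖∇u(z)‖ ≥ C·|u(z) − u(z₀)|^ρ for every z in the open ball of radius σ around z₀ (a Lojasiewicz inequality). Let t₁ < t₂ be reals and let γ : [t₁,t₂] → ℝ² be differentiable with γ′(t) = −∇u(γ(t)), γ(t) in the open ball of radius σ around z₀, and u(γ(t)) ≥ u(z₀) for all t ∈ [t₁,t₂]. Then the length of γ satisfies ∫_{t₁}^{t₂} ‖∇u(γ(t))‖ dt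 ≤ (u(γ(t₁)) − u(z₀))^{1−ρ} / (C·(1−ρ)). -/
open Metric Set Filter Topology MeasureTheory

noncomputable section

/-- Length estimate for gradient-descent trajectories under a Lojasiewicz inequality. -/
theorem length_estimate_of_lojasiewicz
    (U : Set E2) (hUo : IsOpen U)
    (u : E2 → ℝ) (hu : DifferentiableOn ℝ u U)
    (z₀ : E2) (hz₀ : z₀ ∈ U)
    (σ : ℝ) (hσ : 0 < σ) (hball : ball z₀ σ ⊆ U)
    (C ρ : ℝ) (hC : 0 < C) (hρ₁ : 1 / 2 ≤ ρ) (hρ₂ : ρ < 1)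
    (hloj : ∀ z ∈ ball z₀ σ, C * |u z - u z₀| ^ ρ ≤ ‖gradient u z‖)
    (t₁ t₂ : ℝ) (ht : t₁ < t₂) (γ : ℝ → E2)
    (hderiv : ∀ t ∈ Icc t₁ t₂, HasDerivAt γ (-(gradient u (γ t))) t)
    (hmem : ∀ t ∈ Icc t₁ t₂, γ t ∈ ball z₀ σ)
    (hge : ∀ t ∈ Icc t₁ t₂, u z₀ ≤ u (γ t)) :
    ∫ t in t₁..t₂, ‖gradient u (γ t)‖ ≤
      (u (γ t₁) - u z₀) ^ (1 - ρ) / (C * (1 - ρ)) := by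
  have hρ' : (0:ℝ) < 1 - ρ := by linarith
  have hden : (0:ℝ) < C * (1 - ρ) := by positivity
  set f : ℝ → ℝ := fun t => ‖gradient u (γ t)‖ with hf
  set h : ℝ → ℝ := fun t => u (γ t) - u z₀ with hhdef
  have hmemIcc : t₁ ∈ Icc t₁ t₂ := ⟨le_rfl, ht.le⟩
  have hmemIcc2 : t₂ ∈ Icc t₁ t₂ := ⟨ht.le, le_rfl⟩
  have h1nonneg : 0 ≤ h t₁ := sub_nonneg.2 (hge t₁ hmemIcc)
  have hrhs : 0 ≤ (u (γ t₁) - u z₀) ^ (1 - ρ) / (C * (1 - ρ)) :=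
    div_nonneg (Real.rpow_nonneg h1nonneg _) hden.le
  by_cases hint : IntervalIntegrable f volume t₁ t₂
  swap
  · rw [intervalIntegral.integral_undef hint]; exact hrhs
  -- derivative of h
  have hderivh : ∀ t ∈ Icc t₁ t₂, HasDerivAt h (-(f t)^2) t := by
    intro t htmem
    have hdiff : DifferentiableAt ℝ u (γ t) :=
      hu.differentiableAt (hUo.mem_nhds (hball (hmem t htmem)))
    have hfd := hdiff.hasGradientAt.hasFDerivAt
    have hc := hfd.comp_hasDerivAt t (hderiv t htmem)
    have heq : (InnerProductSpace.toDual ℝ E2 (gradient u (γ t)))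
        (-(gradient u (γ t))) = -(f t)^2 := by
      rw [InnerProductSpace.toDual_apply_apply, inner_neg_right,
        real_inner_self_eq_norm_sq]
    have hc' : HasDerivAt (fun s => u (γ s)) (-(f t)^2) t := heq ▸ hc
    simpa [hhdef] using hc'.sub_const (u z₀)
  have hcont : ContinuousOn h (Icc t₁ t₂) := fun t htmem =>
    (hderivh t htmem).continuousAt.continuousWithinAt
  have hnonneg : ∀ t ∈ Icc t₁ t₂, 0 ≤ h t := fun t htmem =>
    sub_nonneg.2 (hge t htmem)
  -- h antitone on Icc
  have hanti : AntitoneOn h (Icc t₁ t₂) := by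
    apply antitoneOn_of_deriv_nonpos (convex_Icc t₁ t₂) hcont
    · intro t htmem
      rw [interior_Icc] at htmem
      exact ((hderivh t (Ioo_subset_Icc_self htmem)).differentiableAt).differentiableWithinAt
    · intro t htmem
      rw [interior_Icc] at htmem
      rw [(hderivh t (Ioo_subset_Icc_self htmem)).deriv]
      nlinarith [sq_nonneg (f t)]
  -- the comparison function and its right derivative
  set g : ℝ → ℝ := fun t => -(h t ^ (1 - ρ)) / (C * (1 - ρ)) with hgdef
  set G : ℝ → ℝ := fun t => if h t = 0 then 0 else (f t)^2 * h t ^ (-ρ) / C with hGdef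
  have hgcont : ContinuousOn g (Icc t₁ t₂) :=
    ((hcont.rpow_const (fun t _ => Or.inr hρ'.le)).neg).div_const _
  have hgderiv : ∀ t ∈ Ioo t₁ t₂, HasDerivWithinAt g (G t) (Ioi t) t := by
    intro t htmem
    have htIcc : t ∈ Icc t₁ t₂ := Ioo_subset_Icc_self htmem
    rcases eq_or_lt_of_le (hnonneg t htIcc) with h0 | hpos
    · -- h t = 0 : g is eventually constant on the right
      have hGt : G t = 0 := by simp [hGdef, ← h0]
      rw [hGt]
      have hev : g =ᶠ[𝓝[>] t] fun _ => -(0 : ℝ) ^ (1 - ρ) / (C * (1 - ρ)) := by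
        filter_upwards [Ioo_mem_nhdsGT htmem.2] with s hs
        have hsIcc : s ∈ Icc t₁ t₂ := ⟨htmem.1.le.trans hs.1.le, hs.2.le⟩
        have hle : h s ≤ h t := hanti htIcc hsIcc hs.1.le
        have hs0 : h s = 0 := le_antisymm (h0 ▸ hle) (hnonneg s hsIcc)
        simp [hgdef, hs0]
      exact (hasDerivWithinAt_const t (Ioi t)
        (-(0 : ℝ) ^ (1 - ρ) / (C * (1 - ρ)))).congr_of_eventuallyEq hev
        (by simp [hgdef, ← h0])
    · have hGt : G t = (f t)^2 * h t ^ (-ρ) / C := by simp [hGdef, hpos.ne']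
      rw [hGt]
      have hpow : HasDerivAt (fun s => h s ^ (1 - ρ))
          (-(f t)^2 * (1 - ρ) * h t ^ (1 - ρ - 1)) t :=
        (hderivh t htIcc).rpow_const (Or.inl hpos.ne')
      have hg' : HasDerivAt g
          (-(-(f t)^2 * (1 - ρ) * h t ^ (1 - ρ - 1)) / (C * (1 - ρ))) t :=
        hpow.neg.div_const _
      have hsimp : -(-(f t)^2 * (1 - ρ) * h t ^ (1 - ρ - 1)) / (C * (1 - ρ))
          = (f t)^2 * h t ^ (-ρ) / C := by
        rw [show (1:ℝ) - ρ - 1 = -ρ by ring]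
        field_simp
      exact (hsimp ▸ hg').hasDerivWithinAt
  have hle : ∀ t ∈ Ioo t₁ t₂, f t ≤ G t := by
    intro t htmem
    have htIcc : t ∈ Icc t₁ t₂ := Ioo_subset_Icc_self htmem
    have hloc := hloj (γ t) (hmem t htIcc)
    rw [abs_of_nonneg (hnonneg t htIcc)] at hloc
    rcases eq_or_lt_of_le (hnonneg t htIcc) with h0 | hpos
    · -- h t = 0 : t is a local min of h so f t = 0
      have hGt : G t = 0 := by simp [hGdef, ← h0]
      have hmin : IsLocalMin h t :=
        Filter.eventually_of_mem (Icc_mem_nhds htmem.1 htmem.2)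
          (fun s hs => h0 ▸ hnonneg s hs)
      have hf0 : f t = 0 := by
        have := hmin.hasDerivAt_eq_zero (hderivh t htIcc)
        nlinarith [norm_nonneg (gradient u (γ t))]
      rw [hGt, hf0]
    · have hGt : G t = (f t)^2 * h t ^ (-ρ) / C := by simp [hGdef, hpos.ne']
      rw [hGt, le_div_iff₀ hC]
      have hpowpos : (0:ℝ) < h t ^ (-ρ) := Real.rpow_pos_of_pos hpos _
      have hone : h t ^ ρ * h t ^ (-ρ) = 1 := by
        rw [← Real.rpow_add hpos, add_neg_cancel, Real.rpow_zero]
      have key : f t * C = C * h t ^ ρ * h t ^ (-ρ) * f t := by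
        linear_combination (-(C * f t)) * hone
      rw [key]
      calc C * h t ^ ρ * h t ^ (-ρ) * f t
          ≤ f t * h t ^ (-ρ) * f t := by
            apply mul_le_mul_of_nonneg_right _ (norm_nonneg _)
            exact mul_le_mul_of_nonneg_right hloc hpowpos.le
        _ = f t ^ 2 * h t ^ (-ρ) := by ring
  have hintOn : IntegrableOn f (Icc t₁ t₂) :=
    (intervalIntegrable_iff_integrableOn_Icc_of_le ht.le).1 hint
  have hmain := intervalIntegral.integral_le_sub_of_hasDeriv_right_of_le ht.le
    hgcont hgderiv hintOn hle
  refine hmain.trans ?_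
  have h2 : 0 ≤ h t₂ ^ (1 - ρ) := Real.rpow_nonneg (hnonneg t₂ hmemIcc2) _
  have : g t₂ - g t₁ = (h t₁ ^ (1 - ρ) - h t₂ ^ (1 - ρ)) / (C * (1 - ρ)) := by
    simp only [hgdef]; ring
  rw [this]
  show (h t₁ ^ (1 - ρ) - h t₂ ^ (1 - ρ)) / (C * (1 - ρ)) ≤
    h t₁ ^ (1 - ρ) / (C * (1 - ρ))
  gcongr
  linarith
end
end

section
/- Let Ω, U, λ, u be as in the setting, let Γᴰ ⊆ frontier(Ω) satisfy u(z) = 0 for every z ∈ Γᴰ, and let G be the associated boundary-reaching set. Then u(z) ≠ 0 for every z ∈ G, and for every connected set A ⊆ G either u(z) > 0 for all z ∈ A or u(z) < 0 for all z ∈ A. -/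
open Metric Set Filter Topology MeasureTheory

noncomputable section

/-!
Along a gradient-descent flow line `γ' = -∇u(γ)` the function `u ∘ γ` has derivative
`-‖∇u(γ)‖²`, so it is antitone, and it is constant only where the flow is stationary.
A flow line from a zero `z` of `u` in `Ω` to a zero of `u` on `Γᴰ` would therefore be
constant, forcing `z ∈ Γᴰ ⊆ frontier Ω`, impossible for open `Ω`. The sign statement then
follows from the intermediate value theorem.
-/

theorem IsPreconnected.forall_pos_or_forall_neg {X : Type*} [TopologicalSpace X] {A : Set X}
    {f : X → ℝ} (hA : IsPreconnected A) (hf : ContinuousOn f A) (hne : ∀ x ∈ A, f x ≠ 0) :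
    (∀ x ∈ A, 0 < f x) ∨ ∀ x ∈ A, f x < 0 := by
  by_contra! h
  obtain ⟨⟨x, hx, hfx⟩, y, hy, hfy⟩ := h
  obtain ⟨w, hw, hfw⟩ := hA.intermediate_value hx hy hf ⟨hfx, hfy⟩
  exact hne w hw hfw

section GradientFlow

variable {F : Type*} [NormedAddCommGroup F] [InnerProductSpace ℝ F] [CompleteSpace F]
  {u : F → ℝ} {γ : ℝ → F}

theorem HasDerivWithinAt.comp_gradientFlow {s : Set ℝ} {t : ℝ}
    (hu : DifferentiableAt ℝ u (γ t)) (hγ : HasDerivWithinAt γ (-gradient u (γ t)) s t) :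
    HasDerivWithinAt (u ∘ γ) (-‖gradient u (γ t)‖ ^ 2) s t := by
  have := hu.hasGradientAt.hasFDerivAt.comp_hasDerivWithinAt t hγ
  simpa only [InnerProductSpace.toDual_apply_apply, inner_neg_right,
    real_inner_self_eq_norm_sq] using this

theorem gradientFlow_eq_of_apply_eq_of_le {a b : ℝ} (hab : a ≤ b)
    (hγ : ∀ t ∈ Icc a b, HasDerivWithinAt γ (-gradient u (γ t)) (Icc a b) t)
    (hu : ∀ t ∈ Icc a b, DifferentiableAt ℝ u (γ t)) (hend : u (γ a) = u (γ b)) :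
    γ a = γ b := by
  rcases hab.eq_or_lt with rfl | hab
  · rfl
  have hf (t) (ht : t ∈ Icc a b) := (hγ t ht).comp_gradientFlow (hu t ht)
  have hanti : AntitoneOn (u ∘ γ) (Icc a b) :=
    antitoneOn_of_hasDerivWithinAt_nonpos (convex_Icc a b)
      (fun t ht => (hf t ht).continuousWithinAt)
      (fun t ht => (hf t (interior_subset ht)).mono interior_subset)
      (fun t _ => neg_nonpos.mpr (sq_nonneg _))
  have hconst : ∀ t ∈ Icc a b, (u ∘ γ) t = u (γ a) := fun t ht =>
    le_antisymm (hanti (left_mem_Icc.2 hab.le) ht ht.1)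
      (hend ▸ hanti ht (right_mem_Icc.2 hab.le) ht.2)
  have hstationary : ∀ t ∈ Icc a b, gradient u (γ t) = 0 := by
    intro t ht
    have hzero : HasDerivWithinAt (u ∘ γ) 0 (Icc a b) t :=
      (hasDerivWithinAt_const t _ (u (γ a))).congr hconst (hconst t ht)
    have := (uniqueDiffOn_Icc hab t ht).eq_deriv _ (hf t ht) hzero
    simpa using this
  have hγ' : ∀ t ∈ Icc a b, HasDerivWithinAt γ 0 (Icc a b) t := fun t ht => by
    simpa [hstationary t ht] using hγ t ht
  have := (convex_Icc a b).norm_image_sub_le_of_norm_hasDerivWithin_le hγ'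
    (fun _ _ => norm_zero.le) (left_mem_Icc.2 hab.le) (right_mem_Icc.2 hab.le)
  rw [zero_mul, norm_le_zero_iff, sub_eq_zero] at this
  exact this.symm

theorem gradientFlow_eq_of_apply_eq {a b : ℝ}
    (hγ : ∀ t ∈ uIcc a b, HasDerivWithinAt γ (-gradient u (γ t)) (uIcc a b) t)
    (hu : ∀ t ∈ uIcc a b, DifferentiableAt ℝ u (γ t)) (hend : u (γ a) = u (γ b)) :
    γ a = γ b := by
  rcases le_total a b with hab | hba
  · rw [uIcc_of_le hab] at hγ hu
    exact gradientFlow_eq_of_apply_eq_of_le hab hγ hu hend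
  · rw [uIcc_of_ge hba] at hγ hu
    exact (gradientFlow_eq_of_apply_eq_of_le hba hγ hu hend.symm).symm

end GradientFlow

theorem sign_on_boundary_reaching_set_general
    (Ω U : Set E2) (hΩo : IsOpen Ω)
    (hsub : closure Ω ⊆ U)
    (u : E2 → ℝ) (hu : AnalyticOnNhd ℝ u U)
    (ΓD : Set E2) (hΓD : ΓD ⊆ frontier Ω) (hΓDzero : ∀ z ∈ ΓD, u z = 0) :
    let G : Set E2 := {z ∈ Ω | ∃ (T : ℝ) (γ : ℝ → E2), T ≠ 0 ∧ γ 0 = z ∧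
      (∀ t ∈ uIcc (0:ℝ) T, HasDerivWithinAt γ (-(gradient u (γ t))) (uIcc 0 T) t) ∧
      (∀ t ∈ uIcc (0:ℝ) T, γ t ∈ closure Ω) ∧ γ T ∈ ΓD}
    (∀ z ∈ G, u z ≠ 0) ∧
      ∀ A : Set E2, A ⊆ G → IsConnected A →
        (∀ z ∈ A, 0 < u z) ∨ (∀ z ∈ A, u z < 0) := by
  intro G
  have hG : ∀ z ∈ G, u z ≠ 0 := by
    rintro _ ⟨hzΩ, T, γ, -, rfl, hγ, hγΩ, hγT⟩ hz
    have hstart_eq_end : γ 0 = γ T := gradientFlow_eq_of_apply_eq hγ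
      (fun t ht => (hu _ (hsub (hγΩ t ht))).differentiableAt) (by rw [hz, hΓDzero _ hγT])
    exact (disjoint_frontier_iff_isOpen.2 hΩo).ne_of_mem (hΓD hγT) hzΩ hstart_eq_end.symm
  refine ⟨hG, fun A hA hAconn => hAconn.isPreconnected.forall_pos_or_forall_neg ?_ ?_⟩
  · exact hu.continuousOn.mono fun z hz => hsub (subset_closure (hA hz).1)
  · exact fun z hz => hG z (hA hz)

/-- On the set `G` of points whose gradient-descent flow line reaches the Dirichlet part
`Γᴰ` of the boundary in finite time, the eigenfunction `u` never vanishes; moreover `u`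
has a strict constant sign on every connected subset of `G`. -/
theorem sign_on_boundary_reaching_set
    (Ω U : Set E2) (hΩne : Ω.Nonempty) (hΩo : IsOpen Ω)
    (hΩb : Bornology.IsBounded Ω)
    (hUo : IsOpen U) (hUconn : IsConnected U) (hsub : closure Ω ⊆ U)
    (lam : ℝ) (hlam : 0 < lam)
    (u : E2 → ℝ) (hu : AnalyticOnNhd ℝ u U)
    (hne : ∃ z ∈ U, u z ≠ 0)
    (heq : ∀ z ∈ U, lap u z + lam * u z = 0)
    (ΓD : Set E2) (hΓD : ΓD ⊆ frontier Ω) (hΓDzero : ∀ z ∈ ΓD, u z = 0) :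
    let G : Set E2 := {z ∈ Ω | ∃ (T : ℝ) (γ : ℝ → E2), T ≠ 0 ∧ γ 0 = z ∧
      (∀ t ∈ uIcc (0:ℝ) T, HasDerivWithinAt γ (-(gradient u (γ t))) (uIcc 0 T) t) ∧
      (∀ t ∈ uIcc (0:ℝ) T, γ t ∈ closure Ω) ∧ γ T ∈ ΓD}
    (∀ z ∈ G, u z ≠ 0) ∧
      ∀ A : Set E2, A ⊆ G → IsConnected A →
        (∀ z ∈ A, 0 < u z) ∨ (∀ z ∈ A, u z < 0) :=
  sign_on_boundary_reaching_set_general Ω U hΩo hsub u hu ΓD hΓD hΓDzero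
end
end

section
/- For all real numbers a > 0 and b > 0, the limit superior, along the cofinite filter on ℕ × ℕ, of the function sending (n, m) to (2·(n+1)·(m+1) + (n+1) + (m+1)) / ((π·a·b/4)·((n+1)²/a² + (m+1)²/b²)) equals 4/π. -/
/-!
Write `N = n + 1`, `M = m + 1` and `W(N, M) = (π a b / 4) (N²/a² + M²/b²)`. The identity
`(4/π) W = ((bN - aM)² + 2ab NM) / (ab)` gives `2NM / W ≤ 4/π`, while Cauchy–Schwarz gives
`(N + M)² ≤ C W`, so the remaining term `(N + M) / W ≤ C / (N + M)` vanishes along the cofinite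
filter and the limsup is at most `4/π`. Conversely, the ratio is at least `4/π` exactly when
`(bN - aM)² ≤ ab (N + M)`, which holds for `N = ⌊aM/b⌋ + 1` as soon as `M ≥ b/a`, since then
`(bN - aM)² ≤ b² ≤ ab M`: infinitely many points reach `4/π`.
-/

open Filter Real

open scoped Topology

theorem tendsto_fst_add_snd_cofinite {A : Type*} [AddMonoid A] [Finset.HasAntidiagonal A] :
    Tendsto (fun p : A × A => p.1 + p.2) cofinite cofinite :=
  Tendsto.cofinite_of_finite_preimage_singleton fun n => by
    have hfiber : (fun p : A × A => p.1 + p.2) ⁻¹' {n} =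
        ↑(Finset.HasAntidiagonal.antidiagonal n) := by
      ext; simp
    rw [hfiber]
    exact Finset.finite_toSet _

theorem tendsto_const_add_div_cofinite (L C : ℝ) :
    Tendsto (fun p : ℕ × ℕ => L + C / (((p.1 : ℝ) + 1) + ((p.2 : ℝ) + 1))) cofinite (𝓝 L) := by
  have hsum : Tendsto (fun p : ℕ × ℕ => ((p.1 + p.2 : ℕ) : ℝ) + 2) cofinite atTop :=
    tendsto_atTop_add_const_right _ 2
      (tendsto_natCast_atTop_atTop.comp (Nat.cofinite_eq_atTop ▸ tendsto_fst_add_snd_cofinite))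
  convert tendsto_const_nhds.add (tendsto_const_nhds.div_atTop hsum) using 3
  · push_cast; ring
  · simp

noncomputable def rectangleWeyl (a b x y : ℝ) : ℝ :=
  π * a * b / 4 * (x ^ 2 / a ^ 2 + y ^ 2 / b ^ 2)

noncomputable def neumannRatio (a b x y : ℝ) : ℝ :=
  (2 * x * y + x + y) / rectangleWeyl a b x y

section

variable {a b x y : ℝ}

theorem rectangleWeyl_pos (ha : 0 < a) (hb : 0 < b) (hx : 0 < x) :
    0 < rectangleWeyl a b x y := by
  unfold rectangleWeyl; positivity

theorem four_div_pi_mul_rectangleWeyl (ha : a ≠ 0) (hb : b ≠ 0) :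
    4 / π * rectangleWeyl a b x y = ((b * x - a * y) ^ 2 + 2 * a * b * (x * y)) / (a * b) := by
  unfold rectangleWeyl
  field_simp
  ring

theorem sq_add_le_rectangleWeyl (ha : 0 < a) (hb : 0 < b) :
    (x + y) ^ 2 ≤ 4 * (a ^ 2 + b ^ 2) / (π * a * b) * rectangleWeyl a b x y := by
  have hCauchySchwarz :
      (a * (x / a) + b * (y / b)) ^ 2 ≤ (a ^ 2 + b ^ 2) * ((x / a) ^ 2 + (y / b) ^ 2) := by
    nlinarith [sq_nonneg (a * (y / b) - b * (x / a))]
  unfold rectangleWeyl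
  field_simp at hCauchySchwarz ⊢
  linarith

theorem neumannRatio_nonneg (ha : 0 < a) (hb : 0 < b) (hx : 0 ≤ x) (hy : 0 ≤ y) :
    0 ≤ neumannRatio a b x y := by
  unfold neumannRatio rectangleWeyl; positivity

theorem neumannRatio_le (ha : 0 < a) (hb : 0 < b) (hx : 0 < x) (hy : 0 < y) :
    neumannRatio a b x y ≤ 4 / π + 4 * (a ^ 2 + b ^ 2) / (π * a * b) / (x + y) := by
  have hW := rectangleWeyl_pos (y := y) ha hb hx
  have hmain : 2 * x * y / rectangleWeyl a b x y ≤ 4 / π := by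
    refine div_le_of_le_mul₀ hW.le (by positivity) ?_
    rw [four_div_pi_mul_rectangleWeyl ha.ne' hb.ne', le_div_iff₀ (by positivity)]
    nlinarith [sq_nonneg (b * x - a * y)]
  have herror : (x + y) / rectangleWeyl a b x y ≤
      4 * (a ^ 2 + b ^ 2) / (π * a * b) / (x + y) := by
    rw [div_le_div_iff₀ hW (by positivity), ← sq]
    exact sq_add_le_rectangleWeyl ha hb
  calc neumannRatio a b x y
      = 2 * x * y / rectangleWeyl a b x y + (x + y) / rectangleWeyl a b x y := by
        rw [neumannRatio, ← add_div, add_assoc]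
    _ ≤ _ := add_le_add hmain herror

theorem four_div_pi_le_neumannRatio (ha : 0 < a) (hb : 0 < b) (hx : 0 < x)
    (h : (b * x - a * y) ^ 2 ≤ a * b * (x + y)) : 4 / π ≤ neumannRatio a b x y := by
  rw [neumannRatio, le_div_iff₀ (rectangleWeyl_pos ha hb hx),
    four_div_pi_mul_rectangleWeyl ha.ne' hb.ne', div_le_iff₀ (by positivity)]
  nlinarith

theorem frequently_four_div_pi_le_neumannRatio (ha : 0 < a) (hb : 0 < b) :
    ∃ᶠ p : ℕ × ℕ in cofinite, 4 / π ≤ neumannRatio a b (p.1 + 1) (p.2 + 1) := by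
  have hinj : Function.Injective fun m : ℕ => (⌊a * (m + 1) / b⌋₊, m) :=
    fun _ _ h => (Prod.ext_iff.1 h).2
  refine (Nat.cofinite_eq_atTop ▸ hinj.tendsto_cofinite).frequently (Eventually.frequently ?_)
  filter_upwards [eventually_ge_atTop ⌈b / a⌉₊] with m hm
  set t := a * ((m : ℝ) + 1) / b
  have hfloor_le : (⌊t⌋₊ : ℝ) ≤ t := Nat.floor_le (by positivity)
  have hlt_floor : t < ⌊t⌋₊ + 1 := Nat.lt_floor_add_one t
  have hbm : b ≤ a * ((m : ℝ) + 1) := by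
    have : b / a ≤ m := (Nat.le_ceil _).trans (by exact_mod_cast hm)
    rw [div_le_iff₀ ha] at this
    linarith
  refine four_div_pi_le_neumannRatio ha hb (by positivity) ?_
  have hgap : b * (⌊t⌋₊ + 1) - a * ((m : ℝ) + 1) = b * (⌊t⌋₊ + 1 - t) := by
    simp only [t]; field_simp
  have hgap_sq : ((⌊t⌋₊ : ℝ) + 1 - t) ^ 2 ≤ 1 := pow_le_one₀ (by linarith) (by linarith)
  rw [hgap, mul_pow]
  calc b ^ 2 * ((⌊t⌋₊ : ℝ) + 1 - t) ^ 2
      ≤ b * (a * ((m : ℝ) + 1)) := by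
        nlinarith [mul_le_mul_of_nonneg_left hgap_sq (sq_nonneg b),
          mul_le_mul_of_nonneg_left hbm hb.le]
    _ ≤ a * b * (⌊t⌋₊ + 1 + ((m : ℝ) + 1)) := by
        nlinarith [mul_nonneg (mul_pos ha hb).le (Nat.cast_nonneg (α := ℝ) ⌊t⌋₊)]

end

/-- Arithmetic core of the Neumann-domain count for the rectangle `(0,a) × (0,b)`:
the limsup, along the cofinite filter on `ℕ × ℕ`, of the ratio of the Neumann domain
count `2nm + n + m` (for positive integers `n = p.1 + 1`, `m = p.2 + 1`) to the Weyl
asymptotics `(π a b / 4) (n²/a² + m²/b²)` equals `4/π`. -/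
theorem rectangle_neumann_count_limsup (a b : ℝ) (ha : 0 < a) (hb : 0 < b) :
    Filter.limsup
      (fun p : ℕ × ℕ =>
        (2 * ((p.1 : ℝ) + 1) * ((p.2 : ℝ) + 1) + ((p.1 : ℝ) + 1) + ((p.2 : ℝ) + 1)) /
          ((Real.pi * a * b / 4) *
            (((p.1 : ℝ) + 1) ^ 2 / a ^ 2 + ((p.2 : ℝ) + 1) ^ 2 / b ^ 2)))
      Filter.cofinite = 4 / Real.pi := by
  change limsup (fun p : ℕ × ℕ => neumannRatio a b (p.1 + 1) (p.2 + 1)) cofinite = 4 / π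
  have hle (p : ℕ × ℕ) : neumannRatio a b (p.1 + 1) (p.2 + 1) ≤
      4 / π + 4 * (a ^ 2 + b ^ 2) / (π * a * b) / (((p.1 : ℝ) + 1) + ((p.2 : ℝ) + 1)) :=
    neumannRatio_le ha hb (by positivity) (by positivity)
  have hlim := tendsto_const_add_div_cofinite (4 / π) (4 * (a ^ 2 + b ^ 2) / (π * a * b))
  have hcobdd : IsCoboundedUnder (· ≤ ·) cofinite
      (fun p : ℕ × ℕ => neumannRatio a b (p.1 + 1) (p.2 + 1)) :=
    isCoboundedUnder_le_of_le _ fun _ => neumannRatio_nonneg ha hb (by positivity) (by positivity)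
  have hupper := (limsup_le_limsup (.of_forall hle) hcobdd hlim.isBoundedUnder_le).trans_eq
    hlim.limsup_eq
  have hbdd := hlim.isBoundedUnder_le.mono_le (.of_forall hle)
  exact le_antisymm hupper
    (le_limsup_of_frequently_le (frequently_four_div_pi_le_neumannRatio ha hb) hbdd)
end

section
/- The supremum of the set { (tan θ − θ)·(cos θ)² : θ ∈ (0, π/2) } is strictly less than 1/4. -/
open Set Real

lemma key (s c : ℝ) (hs : 0 ≤ s) (hc : 0 ≤ c) (hc1 : c ≤ 1) (h : s^2 + c^2 = 1) :
    s * c * (1 - c) ≤ 15/64 := by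
  nlinarith [sq_nonneg (s*c*(1-c) - 15/64), sq_nonneg (c - 1/2), sq_nonneg (c*(1-c) - 1/4), sq_nonneg (s - 9/10), sq_nonneg (s*c - 4/10), mul_nonneg (mul_nonneg hs hc) (by linarith : (0:ℝ) ≤ 1 - c)]

/-- The supremum of `(tan θ − θ)·(cos θ)²` over `θ ∈ (0, π/2)` is strictly less
than `1/4`.  This is equivalent to the disk Neumann-domain count bound
`16·sup_{s>0} s (cos θ(s))² = 0.9226... < 4/π`, where `θ(s) ∈ (0, π/2)` solves
`tan θ − θ = π s`. -/
theorem disk_neumann_count_sup_lt :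
    sSup ((fun θ : ℝ => (Real.tan θ - θ) * Real.cos θ ^ 2) '' Set.Ioo 0 (Real.pi / 2))
      < 1 / 4 := by
  have hpi := Real.pi_pos
  have hne : (Set.Ioo (0:ℝ) (Real.pi/2)).Nonempty := ⟨Real.pi/4, by constructor <;> linarith⟩
  refine lt_of_le_of_lt (csSup_le (hne.image _) ?_) (by norm_num : (15:ℝ)/64 < 1/4)
  rintro x ⟨θ, ⟨h0, h2⟩, rfl⟩
  have hc : 0 < Real.cos θ := Real.cos_pos_of_mem_Ioo ⟨by linarith, h2⟩
  have hs : 0 < Real.sin θ := Real.sin_pos_of_pos_of_lt_pi h0 (by linarith)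
  have hc1 : Real.cos θ ≤ 1 := Real.cos_le_one θ
  have hsθ : Real.sin θ ≤ θ := le_of_lt (Real.sin_lt h0)
  have hpy : Real.sin θ ^ 2 + Real.cos θ ^ 2 = 1 := Real.sin_sq_add_cos_sq θ
  have htan : Real.tan θ = Real.sin θ / Real.cos θ := Real.tan_eq_sin_div_cos θ
  have heq : (Real.tan θ - θ) * Real.cos θ ^ 2 = (Real.sin θ - θ * Real.cos θ) * Real.cos θ := by
    rw [htan]; field_simp
  show (Real.tan θ - θ) * Real.cos θ ^ 2 ≤ _
  rw [heq]
  have hstep : (Real.sin θ - θ * Real.cos θ) * Real.cos θ ≤ Real.sin θ * Real.cos θ * (1 - Real.cos θ) := by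
    nlinarith [mul_le_mul_of_nonneg_right hsθ hc.le]
  exact hstep.trans (key _ _ hs.le hc.le hc1 hpy)
end
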